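/- arXiv:math/0702858 — 3 statements merged into one kernel-verified Lean document; each statement's English description precedes it below -/
import Mathlib

section
/- Let A, B, C, D : ℕ → ℕ be finitely supported sequences. For a finitely supported sequence X let l(X) be the least natural number such that X n = 0 for all n ≥ l(X), and define the concatenation X ⌢ Y by (X ⌢ Y)(n) = X(n) for n < l(X) and (X ⌢ Y)(n) = Y(n − l(X)) for n ≥ l(X). Then, writing ⊕ for pointwise addition, one has ((A ⊕ B) ⌢ (C ⊕ D)) ≤ ((A ⌢ C) ⊕ (B ⌢ D)) in the lexicographic order on finitely supported sequences. -/
/-!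
For finitely supported `X`, the concatenation `X ⌢ Y` is `X + Y` shifted right by `len X`, and
`len (A + B) = max (len A) (len B)`. Assuming `len A ≤ len B`, both sides are therefore
`A + B + (D shifted by len B)` plus `C` shifted right, by `len B` on the left and by `len A` on
the right. Shifting a sequence further right can only make it lexicographically smaller, and
adding a common sequence preserves the lexicographic order.
-/

/-- A sequence is finitely supported if it is eventually zero. -/
def FinSupported (A : ℕ → ℕ) : Prop :=
  ∃ N, ∀ n, N ≤ n → A n = 0

/-- The lexicographic order on sequences: `A ≤ B` iff `A = B` or at the smallest index
where they differ, the entry of `A` is smaller. -/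
def LexLe (A B : ℕ → ℕ) : Prop :=
  A = B ∨ ∃ n, (∀ m, m < n → A m = B m) ∧ A n < B n

/-- The length of a finitely supported sequence: the least `N` such that `X n = 0`
for all `n ≥ N`. -/
noncomputable def len (X : ℕ → ℕ) : ℕ :=
  sInf {N | ∀ n, N ≤ n → X n = 0}

/-- Concatenation of sequences: `X` followed by `Y`. -/
noncomputable def concat (X Y : ℕ → ℕ) : ℕ → ℕ :=
  fun n => if n < len X then X n else Y (n - len X)

def shiftR (k : ℕ) (X : ℕ → ℕ) : ℕ → ℕ :=
  fun n => if n < k then 0 else X (n - k)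

theorem shiftR_add (k : ℕ) (X Y : ℕ → ℕ) : shiftR k (X + Y) = shiftR k X + shiftR k Y := by
  funext n
  simp only [shiftR, Pi.add_apply]
  split_ifs <;> rfl

theorem shiftR_eq_zero_of_lt {X : ℕ → ℕ} {i k n : ℕ} (hX : ∀ m < i, X m = 0) (hn : n < k + i) :
    shiftR k X n = 0 := by
  unfold shiftR
  split_ifs
  · rfl
  · exact hX _ (by omega)

theorem len_le_iff {X : ℕ → ℕ} (hX : FinSupported X) {N : ℕ} :
    len X ≤ N ↔ ∀ n, N ≤ n → X n = 0 :=
  ⟨fun h n hn => Nat.sInf_mem hX n (h.trans hn), fun h => Nat.sInf_le h⟩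

theorem FinSupported.add {X Y : ℕ → ℕ} (hX : FinSupported X) (hY : FinSupported Y) :
    FinSupported (X + Y) := by
  obtain ⟨N, hN⟩ := hX
  obtain ⟨M, hM⟩ := hY
  exact ⟨max N M, fun n hn => by simp [hN n (by omega), hM n (by omega)]⟩

theorem len_add {X Y : ℕ → ℕ} (hX : FinSupported X) (hY : FinSupported Y) :
    len (X + Y) = max (len X) (len Y) := by
  refine eq_of_forall_ge_iff fun N => ?_
  rw [max_le_iff, len_le_iff (hX.add hY), len_le_iff hX, len_le_iff hY, ← forall_and]
  exact forall_congr' fun n => by rw [Pi.add_apply, Nat.add_eq_zero_iff, imp_and]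

theorem concat_eq_add_shiftR {X : ℕ → ℕ} (hX : FinSupported X) (Y : ℕ → ℕ) :
    concat X Y = X + shiftR (len X) Y := by
  funext n
  simp only [concat, shiftR, Pi.add_apply]
  split_ifs with hn
  · rfl
  · rw [(len_le_iff hX).1 le_rfl n (not_lt.1 hn), zero_add]

theorem LexLe.add_left {X Y : ℕ → ℕ} (h : LexLe X Y) (P : ℕ → ℕ) : LexLe (P + X) (P + Y) := by
  rcases h with rfl | ⟨n, heq, hlt⟩
  · exact Or.inl rfl
  · exact Or.inr ⟨n, fun m hm => by simp [heq m hm], by simpa using hlt⟩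

theorem shiftR_lexLe_shiftR {j k : ℕ} (hjk : j ≤ k) (X : ℕ → ℕ) :
    LexLe (shiftR k X) (shiftR j X) := by
  rcases hjk.eq_or_lt with rfl | hjk
  · exact Or.inl rfl
  by_cases hX : ∃ i, X i ≠ 0
  · obtain ⟨i, hi, hmin⟩ : ∃ i, X i ≠ 0 ∧ ∀ m < i, X m = 0 :=
      ⟨Nat.find hX, Nat.find_spec hX, fun m hm => not_not.1 (Nat.find_min hX hm)⟩
    -- both shifts vanish below `j + i`, and there only `shiftR j X` has reached `X i ≠ 0`
    refine Or.inr ⟨j + i, fun m hm => ?_, ?_⟩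
    · rw [shiftR_eq_zero_of_lt hmin (by omega), shiftR_eq_zero_of_lt hmin hm]
    · rw [shiftR_eq_zero_of_lt hmin (by omega)]
      simpa [shiftR] using Nat.pos_of_ne_zero hi
  · rw [not_exists_not] at hX
    exact Or.inl (by funext n; simp [shiftR, hX])

theorem concat_add_interchange_general (A B C D : ℕ → ℕ)
    (hA : FinSupported A) (hB : FinSupported B) :
    LexLe (concat (A + B) (C + D)) (concat A C + concat B D) := by
  wlog hAB : len A ≤ len B generalizing A B C D
  · have := this B A D C hB hA (le_of_not_ge hAB)
    rwa [add_comm B A, add_comm D C, add_comm (concat B D)] at this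
  rw [concat_eq_add_shiftR (hA.add hB), concat_eq_add_shiftR hA, concat_eq_add_shiftR hB,
    len_add hA hB, max_eq_right hAB, shiftR_add]
  convert (shiftR_lexLe_shiftR hAB C).add_left (A + B + shiftR (len B) D) using 1 <;> abel

/-- the interchange inequality between concatenation and pointwise addition:
`(A ⊕ B) ⌢ (C ⊕ D) ≤ (A ⌢ C) ⊕ (B ⌢ D)` lexicographically. -/
theorem concat_add_interchange (A B C D : ℕ → ℕ)
    (hA : FinSupported A) (hB : FinSupported B) (hC : FinSupported C) (hD : FinSupported D) :
    LexLe (concat (A + B) (C + D)) (concat A C + concat B D) :=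
  concat_add_interchange_general A B C D hA hB
end

section
/- Let A, B, C, D : ℕ → ℕ be finitely supported nonincreasing sequences with A ≤ B and C ≤ D in the lexicographic order. Then merge(A, C) ≤ merge(B, D) in the lexicographic order. -/
/-- The multiset of nonzero values (with multiplicity) of a finitely supported sequence. -/
noncomputable def vals (A : ℕ → ℕ) : Multiset ℕ :=
  Multiset.filter (fun x => x ≠ 0) (((List.range (len A)).map A : List ℕ) : Multiset ℕ)

/-- Merge of two finitely supported sequences: the nonincreasing finitely supported
sequence whose multiset of nonzero values is the multiset sum of those of `A` and `B`
(concatenate and sort into nonincreasing order). -/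
noncomputable def merge (A B : ℕ → ℕ) : ℕ → ℕ :=
  fun n => (((vals A + vals B).sort (· ≤ ·)).reverse).getD n 0

/-! A finitely supported nonincreasing sequence is determined by the multiplicities
`d ↦ #{n | X n = d}` of its nonzero values, and on such sequences the lexicographic order
matches the colexicographic order of multiplicity functions: if `A` and `B` first differ at `n`
with `A n < B n`, then their multiplicities agree above `B n`, while `B` has more entries equal
to `B n`. Merging adds multiplicity functions, and the colex order on `ℕ →₀ ℕ` is compatible
with addition. -/

open Finset

lemma lexLe_iff_toLex_le {A B : ℕ → ℕ} : LexLe A B ↔ toLex A ≤ toLex B := by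
  rw [le_iff_eq_or_lt]
  rfl

section

variable {X : ℕ → ℕ}

lemma apply_eq_zero_of_len_le (hX : FinSupported X) {n : ℕ} (hn : len X ≤ n) : X n = 0 :=
  Nat.sInf_mem hX n hn

lemma len_le_of_forall_eq_zero {N : ℕ} (h : ∀ n, N ≤ n → X n = 0) : len X ≤ N :=
  Nat.sInf_le h

lemma count_vals_eq_card_filter (hX : FinSupported X) {d N : ℕ} (hd : d ≠ 0)
    (hN : ∀ m, N ≤ m → X m ≠ d) : (vals X).count d = #{m ∈ range N | X m = d} := by
  rw [vals, Multiset.count_filter_of_pos (p := fun x => x ≠ 0) hd, ← Multiset.map_coe,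
    Multiset.count_map, Multiset.coe_range, ← Finset.range_val, ← Finset.filter_val]
  change #{m ∈ range (len X) | d = X m} = _
  congr 1
  ext m
  simp only [mem_filter, mem_range, eq_comm (a := d)]
  refine and_congr_left fun hm => ⟨fun _ => ?_, fun _ => ?_⟩
  · exact not_le.mp fun h => hN m h hm
  · exact not_le.mp fun h => hd (hm ▸ apply_eq_zero_of_len_le hX h)

lemma count_vals_eq_card_filter_of_lt (hX : FinSupported X) (hX' : Antitone X) {n d : ℕ}
    (h : X n < d) : (vals X).count d = #{m ∈ range n | X m = d} :=
  count_vals_eq_card_filter hX (Nat.ne_zero_of_lt h) fun _ hm => ((hX' hm).trans_lt h).ne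

end

lemma len_getD {l : List ℕ} (hl : 0 ∉ l) : len (l.getD · 0) = l.length := by
  refine le_antisymm (len_le_of_forall_eq_zero fun _ => List.getD_eq_default _ _)
    (not_lt.mp fun h => hl ?_)
  have hzero := apply_eq_zero_of_len_le ⟨_, fun _ => List.getD_eq_default l 0⟩ le_rfl
  rw [List.getD_eq_getElem _ _ h] at hzero
  exact hzero ▸ List.getElem_mem h

lemma vals_getD {l : List ℕ} (hl : 0 ∉ l) : vals (l.getD · 0) = l := by
  have hmap : (List.range l.length).map (l.getD · 0) = l :=
    List.ext_getElem (by simp) fun i _ h => by simp [h]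
  rw [vals, len_getD hl, hmap, Multiset.filter_eq_self]
  exact fun x hx hx0 => hl (hx0 ▸ hx)

lemma List.SortedGE.antitone_getD {l : List ℕ} (hl : l.SortedGE) :
    Antitone (l.getD · 0) := by
  intro m n hmn
  dsimp only
  rcases lt_or_ge n l.length with h | h
  · rw [List.getD_eq_getElem _ _ h, List.getD_eq_getElem _ _ (hmn.trans_lt h)]
    exact hl.getElem_ge_getElem_of_le hmn
  · rw [List.getD_eq_default _ _ h]
    exact Nat.zero_le _

lemma merge_finSupported (A C : ℕ → ℕ) : FinSupported (merge A C) :=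
  ⟨_, fun _ => List.getD_eq_default _ _⟩

lemma merge_antitone (A C : ℕ → ℕ) : Antitone (merge A C) :=
  (List.Pairwise.sortedLE (Multiset.pairwise_sort _ _)).reverse.antitone_getD

lemma vals_merge (A C : ℕ → ℕ) : vals (merge A C) = vals A + vals C := by
  unfold merge
  rw [vals_getD (by simp [vals]), Multiset.coe_reverse, Multiset.sort_eq]

noncomputable def multiplicities (X : ℕ → ℕ) : ℕ →₀ ℕ :=
  Multiset.toFinsupp (vals X)

lemma multiplicities_apply (X : ℕ → ℕ) (d : ℕ) :
    multiplicities X d = (vals X).count d :=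
  rfl

lemma multiplicities_merge (A C : ℕ → ℕ) :
    multiplicities (merge A C) = multiplicities A + multiplicities C := by
  rw [multiplicities, vals_merge, map_add]
  rfl

lemma multiplicities_lt_of_toLex_lt {A B : ℕ → ℕ} (hA : FinSupported A) (hA' : Antitone A)
    (hB : FinSupported B) (hB' : Antitone B) (h : toLex A < toLex B) :
    toColex (multiplicities A) < toColex (multiplicities B) := by
  obtain ⟨n, hpre, hlt⟩ := h
  have hlt : A n < B n := hlt
  have hpre : ∀ m ∈ range n, A m = B m := fun m hm => hpre m (mem_range.mp hm)
  have hBn : B n ≠ 0 := Nat.ne_zero_of_lt hlt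
  have hB_zero : ∀ m, len B ≤ m → B m = 0 := fun m hm => apply_eq_zero_of_len_le hB hm
  have hn : n < len B := not_le.mp fun h => hBn (hB_zero n h)
  refine Finsupp.Colex.lt_iff.mpr ⟨B n, fun d hd => ?_, ?_⟩
  · change multiplicities A d = multiplicities B d
    rw [multiplicities_apply, multiplicities_apply,
      count_vals_eq_card_filter_of_lt hA hA' (hlt.trans hd),
      count_vals_eq_card_filter_of_lt hB hB' hd, filter_congr fun m hm => by rw [hpre m hm]]
  · change multiplicities A (B n) < multiplicities B (B n)
    rw [multiplicities_apply, multiplicities_apply, count_vals_eq_card_filter_of_lt hA hA' hlt,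
      count_vals_eq_card_filter hB hBn fun m hm => (hB_zero m hm).trans_ne hBn.symm,
      filter_congr fun m hm => by rw [hpre m hm]]
    refine card_lt_card ((ssubset_iff_of_subset ?_).mpr ⟨n, ?_, ?_⟩)
    · exact filter_subset_filter _ (range_subset_range.mpr hn.le)
    · simp [hn]
    · simp

lemma lexLe_iff_multiplicities_le {A B : ℕ → ℕ} (hA : FinSupported A) (hA' : Antitone A)
    (hB : FinSupported B) (hB' : Antitone B) :
    LexLe A B ↔ toColex (multiplicities A) ≤ toColex (multiplicities B) := by
  rw [lexLe_iff_toLex_le]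
  refine ⟨fun h => ?_, fun h => not_lt.mp fun h' =>
    (multiplicities_lt_of_toLex_lt hB hB' hA hA' h').not_ge h⟩
  obtain h | h := h.eq_or_lt
  · rw [toLex_inj.mp h]
  · exact (multiplicities_lt_of_toLex_lt hA hA' hB hB' h).le

/-- merging is monotone for the lexicographic order on finitely supported
nonincreasing sequences: `A ≤ B` and `C ≤ D` imply `merge A C ≤ merge B D`. -/
theorem merge_mono (A B C D : ℕ → ℕ)
    (hA : FinSupported A) (hB : FinSupported B) (hC : FinSupported C) (hD : FinSupported D)
    (hA' : Antitone A) (hB' : Antitone B) (hC' : Antitone C) (hD' : Antitone D)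
    (hAB : LexLe A B) (hCD : LexLe C D) :
    LexLe (merge A C) (merge B D) := by
  rw [lexLe_iff_multiplicities_le (merge_finSupported A C) (merge_antitone A C)
    (merge_finSupported B D) (merge_antitone B D), multiplicities_merge, multiplicities_merge,
    toColex_add, toColex_add]
  exact add_le_add ((lexLe_iff_multiplicities_le hA hA' hB hB').mp hAB)
    ((lexLe_iff_multiplicities_le hC hC' hD hD').mp hCD)
end

section
/- For n ≥ 1 define the finitely supported sequence Y(n) : ℕ → ℕ by Y(n)(k) = ⌊(2n + 2^k − 1) / 2^(k+1)⌋ for k ≥ 1 (that is, n/2^k rounded to the nearest integer with halves rounded down) and Y(n)(0) arranged so that Y(n) lists the column heights starting at index 1; equivalently Y(n) is the nonincreasing sequence (Round(n/2), Round(n/4), Round(n/8), …). Then Y(1) is the zero sequence, Y(2) is the sequence (1, 0, 0, …), and for every n ≥ 3, Y(n) equals the lexicographic maximum, over all m with 2 ≤ m ≤ n−1 and all lists of positive integers j_1, …, j_m with j_1 + ⋯ + j_m = n, of merge(Y(m), Y(j_1) ⊕ ⋯ ⊕ Y(j_m)). In particular merge(Y(m), Y(j_1) ⊕ ⋯ ⊕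 Y(j_m)) ≤ Y(n) lexicographically for every such composition. -/
/-- `Y n` is the nonincreasing sequence `(Round(n/2), Round(n/4), Round(n/8), …)` of
column heights, with halves rounded down: the entry at (0-based) index `k` is
`n / 2^(k+1)` rounded to the nearest integer with halves rounded down. -/
def Y (n : ℕ) : ℕ → ℕ :=
  fun k => (2 * n + 2 ^ (k + 1) - 1) / 2 ^ (k + 2)

/-!
With ceiling division, `Y n k = ⌈n / 2^k⌉ / 2` and `⌈n / 2^(k+1)⌉ = ⌈⌈n / 2^k⌉ / 2⌉`, so the
first `k` columns of `Y n` hold `n - ⌈n / 2^k⌉` boxes. Lexicographic order follows from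
domination of all partial sums, and the first `k` entries of `merge A B` (for nonincreasing
`A`, `B`) sum to at most the first `a` entries of `A` plus the first `b` of `B`, for some
`a + b = k`. For `A = Y m` and `B = Y j₁ ⊕ ⋯ ⊕ Y jₘ` with `Σ jᵢ = n` this reduces to
`⌈n / 2^(a+b)⌉ + m ≤ ⌈m / 2^a⌉ + Σ ⌈jᵢ / 2^b⌉`, which holds because `K = Σ ⌈jᵢ / 2^b⌉` is at
least both `m` and `⌈n / 2^b⌉`, and `⌈(m + d) / 2^a⌉ ≤ ⌈m / 2^a⌉ + d`.

The maximum is attained by `m = ⌈n / 2⌉` and `(j₁, …, jₘ) = (2, …, 2)`, with one `1` appended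
when `n` is odd: the sum `Y 2 ⊕ ⋯ ⊕ Y 2 ⊕ Y 1` is a single column of height `⌊n / 2⌋`, and
prepending it to `Y ⌈n / 2⌉` gives `Y n` because `Y n (k + 1) = Y ⌈n / 2⌉ k`.
-/

namespace Nat

theorem ceilDiv_ceilDiv (n a b : ℕ) : n ⌈/⌉ a ⌈/⌉ b = n ⌈/⌉ (a * b) := by
  rcases a.eq_zero_or_pos with rfl | ha
  · simp
  rcases b.eq_zero_or_pos with rfl | hb
  · simp
  refine eq_of_forall_ge_iff fun c => ?_
  rw [ceilDiv_le_iff_le_mul hb, ceilDiv_le_iff_le_mul ha, ceilDiv_le_iff_le_mul (mul_pos ha hb),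
    mul_assoc]

theorem le_mul_ceilDiv (n : ℕ) {d : ℕ} (hd : 0 < d) : n ≤ d * (n ⌈/⌉ d) :=
  (ceilDiv_le_iff_le_mul hd).1 le_rfl

@[gcongr]
theorem ceilDiv_le_ceilDiv_left {x y : ℕ} (h : x ≤ y) (d : ℕ) : x ⌈/⌉ d ≤ y ⌈/⌉ d :=
  Nat.div_le_div_right (by omega)

theorem add_ceilDiv_le (m e d : ℕ) : (m + e) ⌈/⌉ d ≤ m ⌈/⌉ d + e := by
  rcases d.eq_zero_or_pos with rfl | hd
  · simp
  rw [ceilDiv_le_iff_le_mul hd, mul_add]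
  exact add_le_add (le_mul_ceilDiv m hd) (le_mul_of_one_le_left' hd)

theorem list_sum_ceilDiv_le (L : List ℕ) {d : ℕ} (hd : 0 < d) :
    L.sum ⌈/⌉ d ≤ (L.map (· ⌈/⌉ d)).sum := by
  rw [ceilDiv_le_iff_le_mul hd, ← List.sum_map_mul_left]
  simpa using List.sum_le_sum (f := id) fun j _ => le_mul_ceilDiv j hd

theorem length_le_sum_ceilDiv {L : List ℕ} (hL : ∀ x ∈ L, 0 < x) {d : ℕ} (hd : 0 < d) :
    L.length ≤ (L.map (· ⌈/⌉ d)).sum := by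
  calc L.length = (L.map fun _ => 1).sum := by simp
    _ ≤ (L.map (· ⌈/⌉ d)).sum := List.sum_le_sum fun x hx => Nat.pos_of_ne_zero fun h =>
        (hL x hx).ne' (by simpa [ceilDiv_le_iff_le_mul hd] using h.le)

end Nat

theorem sum_ceilDiv_mul_add_length_le {L : List ℕ} (hL : ∀ x ∈ L, 0 < x) {d : ℕ} (hd : 0 < d)
    (e : ℕ) :
    L.sum ⌈/⌉ (d * e) + L.length ≤ L.length ⌈/⌉ e + (L.map (· ⌈/⌉ d)).sum := by
  set K := (L.map (· ⌈/⌉ d)).sum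
  have hlen : L.length ≤ K := Nat.length_le_sum_ceilDiv hL hd
  calc L.sum ⌈/⌉ (d * e) + L.length
      = L.sum ⌈/⌉ d ⌈/⌉ e + L.length := by rw [Nat.ceilDiv_ceilDiv]
    _ ≤ (L.length + (K - L.length)) ⌈/⌉ e + L.length := by
        rw [Nat.add_sub_cancel' hlen]
        gcongr ?_ ⌈/⌉ e + _
        exact Nat.list_sum_ceilDiv_le L hd
    _ ≤ L.length ⌈/⌉ e + (K - L.length) + L.length := by
        gcongr; exact Nat.add_ceilDiv_le _ _ _
    _ = L.length ⌈/⌉ e + K := by omega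

theorem lexLe_of_sum_range_le {A B : ℕ → ℕ}
    (h : ∀ k, ∑ i ∈ Finset.range k, A i ≤ ∑ i ∈ Finset.range k, B i) : LexLe A B := by
  by_cases hAB : A = B
  · exact Or.inl hAB
  have hex : ∃ i, A i ≠ B i := Function.ne_iff.1 hAB
  have hbelow : ∀ m < Nat.find hex, A m = B m := fun m hm => not_not.1 (Nat.find_min hex hm)
  refine Or.inr ⟨Nat.find hex, hbelow, lt_of_le_of_ne ?_ (Nat.find_spec hex)⟩
  have hsum : ∑ i ∈ Finset.range (Nat.find hex), A i = ∑ i ∈ Finset.range (Nat.find hex), B i :=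
    Finset.sum_congr rfl fun i hi => hbelow i (Finset.mem_range.1 hi)
  have hk := h (Nat.find hex + 1)
  rw [Finset.sum_range_succ, Finset.sum_range_succ, hsum] at hk
  omega

theorem sum_range_getD_eq_sum_take (l : List ℕ) (k : ℕ) :
    ∑ i ∈ Finset.range k, l.getD i 0 = (l.take k).sum := by
  induction l generalizing k with
  | nil => simp
  | cons x l ih =>
    cases k with
    | zero => simp
    | succ k =>
      rw [Finset.sum_range_succ', List.take_succ_cons, List.sum_cons, ← ih]
      simp [add_comm]

theorem Multiset.exists_le_le_of_le_add {α : Type*} [DecidableEq α] {T M₁ M₂ : Multiset α}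
    (h : T ≤ M₁ + M₂) : ∃ T₁ ≤ M₁, ∃ T₂ ≤ M₂, T = T₁ + T₂ := by
  refine ⟨T ∩ M₁, Multiset.inter_le_right, T - T ∩ M₁, ?_,
    (add_tsub_cancel_of_le Multiset.inter_le_left).symm⟩
  rw [Multiset.sub_le_iff_le_add, Multiset.le_iff_count]
  intro x
  have := Multiset.le_iff_count.1 h x
  simp only [Multiset.count_add, Multiset.count_inter] at this ⊢
  omega

theorem sum_le_sum_range_card {A : ℕ → ℕ} (hA : Antitone A) {N : ℕ} {T : Multiset ℕ}
    (hT : T ≤ ((List.range N).map A : Multiset ℕ)) :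
    T.sum ≤ ∑ i ∈ Finset.range (Multiset.card T), A i := by
  induction N generalizing T with
  | zero => simp_all
  | succ N ih =>
    have hT' : T ≤ A N ::ₘ ((List.range N).map A : Multiset ℕ) := by
      rwa [List.range_succ, List.map_append, List.map_singleton,
        Multiset.coe_eq_coe.2 (List.perm_append_singleton _ _)] at hT
    by_cases hN : A N ∈ T
    · have hle := Multiset.erase_le_iff_le_cons.2 hT'
      have hcard : Multiset.card (T.erase (A N)) ≤ N := by
        simpa using Multiset.card_le_card hle
      rw [← Multiset.cons_erase hN, Multiset.sum_cons, Multiset.card_cons, Finset.sum_range_succ,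
        add_comm (A N)]
      exact add_le_add (ih hle) (hA hcard)
    · exact ih ((Multiset.le_cons_of_notMem hN).1 hT')

theorem exists_sum_range_merge_le {A B : ℕ → ℕ} (hA : Antitone A) (hB : Antitone B) (k : ℕ) :
    ∃ a b, a + b = k ∧
      ∑ i ∈ Finset.range k, merge A B i ≤
        ∑ i ∈ Finset.range a, A i + ∑ i ∈ Finset.range b, B i := by
  set l := ((vals A + vals B).sort (· ≤ ·)).reverse
  have hle : ((l.take k : List ℕ) : Multiset ℕ) ≤ vals A + vals B := by
    refine (Multiset.coe_le.2 (List.take_sublist k l).subperm).trans ?_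
    rw [Multiset.coe_reverse, Multiset.sort_eq]
  obtain ⟨T₁, h₁, T₂, h₂, hT⟩ := Multiset.exists_le_le_of_le_add hle
  have hcard : Multiset.card T₁ + Multiset.card T₂ ≤ k := by
    simp [← Multiset.card_add, ← hT]
  refine ⟨Multiset.card T₁, k - Multiset.card T₁, by omega, ?_⟩
  calc ∑ i ∈ Finset.range k, merge A B i = (l.take k).sum := sum_range_getD_eq_sum_take l k
    _ = T₁.sum + T₂.sum := by rw [← Multiset.sum_coe, hT, Multiset.sum_add]
    _ ≤ ∑ i ∈ Finset.range (Multiset.card T₁), A i +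
          ∑ i ∈ Finset.range (Multiset.card T₂), B i :=
        add_le_add (sum_le_sum_range_card hA (h₁.trans (Multiset.filter_le _ _)))
          (sum_le_sum_range_card hB (h₂.trans (Multiset.filter_le _ _)))
    _ ≤ _ := by gcongr; omega

theorem apply_eq_zero_of_len_le_s15 {A : ℕ → ℕ} {N : ℕ} (hN : ∀ k, N ≤ k → A k = 0) {k : ℕ}
    (hk : len A ≤ k) : A k = 0 :=
  Nat.sInf_mem (s := {N | ∀ n, N ≤ n → A n = 0}) ⟨N, hN⟩ k hk

theorem apply_ne_zero_of_lt_len {A : ℕ → ℕ} (hA : Antitone A) {k : ℕ} (hk : k < len A) :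
    A k ≠ 0 := fun h0 =>
  hk.not_ge (Nat.sInf_le fun _ hn => Nat.eq_zero_of_le_zero (h0 ▸ hA hn))

theorem vals_eq_filter_range {A : ℕ → ℕ} {N : ℕ} (hN : ∀ k, N ≤ k → A k = 0) :
    vals A = (((List.range N).map A : List ℕ) : Multiset ℕ).filter (· ≠ 0) := by
  have hlen : len A ≤ N := Nat.sInf_le hN
  obtain ⟨d, rfl⟩ := Nat.exists_eq_add_of_le hlen
  rw [vals, List.range_add, List.map_append, ← Multiset.coe_add, Multiset.filter_add,
    left_eq_add, Multiset.filter_eq_nil]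
  simp only [Multiset.mem_coe, List.map_map, List.mem_map, Function.comp_apply]
  rintro _ ⟨i, -, rfl⟩
  simpa using apply_eq_zero_of_len_le_s15 hN (Nat.le_add_right _ i)

theorem vals_eq_of_antitone {A : ℕ → ℕ} (hA : Antitone A) :
    vals A = (((List.range (len A)).map A : List ℕ) : Multiset ℕ) := by
  refine Multiset.filter_eq_self.2 fun x hx => ?_
  obtain ⟨k, hk, rfl⟩ := List.mem_map.1 (Multiset.mem_coe.1 hx)
  exact apply_ne_zero_of_lt_len hA (List.mem_range.1 hk)

theorem merge_eq_of_vals_eq {A B C : ℕ → ℕ} (hC : Antitone C) {N : ℕ}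
    (hN : ∀ k, N ≤ k → C k = 0) (h : vals A + vals B = vals C) : merge A B = C := by
  set l := (List.range (len C)).map C
  have hl : l.Pairwise (· ≥ ·) :=
    List.pairwise_map.2 (List.pairwise_lt_range.imp fun hij => hC hij.le)
  have hsort : (vals A + vals B).sort (· ≤ ·) = l.reverse :=
    List.Perm.eq_of_pairwise' (Multiset.pairwise_sort _ _) (List.pairwise_reverse.2 hl)
      (Multiset.coe_eq_coe.1 (by rw [Multiset.sort_eq, Multiset.coe_reverse, h,
        vals_eq_of_antitone hC]))
  funext i
  rw [merge, hsort, List.reverse_reverse]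
  rcases lt_or_ge i (len C) with hi | hi
  · simp [l, hi]
  · simp [l, hi, apply_eq_zero_of_len_le_s15 hN hi]

theorem vals_ite_zero {t : ℕ} (ht : t ≠ 0) : vals (fun k => if k = 0 then t else 0) = {t} := by
  rw [vals_eq_filter_range (N := 1) fun k hk => if_neg (by omega)]
  simp [ht]

theorem Y_eq_ceilDiv (n k : ℕ) : Y n k = n ⌈/⌉ 2 ^ k / 2 := by
  have h : 2 * n + 2 ^ (k + 1) - 1 = 2 * (n + 2 ^ k - 1) + 1 := by
    have := Nat.one_le_two_pow (n := k); rw [pow_succ]; omega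
  rw [Y, h, Nat.ceilDiv_eq_add_pred_div, Nat.div_div_eq_div_mul,
    show 2 ^ (k + 2) = 2 * (2 ^ k * 2) by ring, ← Nat.div_div_eq_div_mul]
  congr 1
  omega

theorem Y_succ (n k : ℕ) : Y n (k + 1) = Y (n ⌈/⌉ 2) k := by
  rw [Y_eq_ceilDiv, Y_eq_ceilDiv, Nat.ceilDiv_ceilDiv, pow_succ']

theorem Y_zero (n : ℕ) : Y n 0 = n / 2 := by
  simp [Y_eq_ceilDiv]

theorem Y_eq_zero_of_le_two_pow {n k : ℕ} (h : n ≤ 2 ^ k) : Y n k = 0 := by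
  have : n ⌈/⌉ 2 ^ k ≤ 1 := (ceilDiv_le_iff_le_mul (Nat.two_pow_pos k)).2 (by simpa using h)
  rw [Y_eq_ceilDiv]
  omega

theorem Y_eq_zero_of_le {n k : ℕ} (h : n ≤ k) : Y n k = 0 :=
  Y_eq_zero_of_le_two_pow (h.trans Nat.lt_two_pow_self.le)

theorem Y_one : Y 1 = fun _ => 0 :=
  funext fun _ => Y_eq_zero_of_le_two_pow Nat.one_le_two_pow

theorem Y_two : Y 2 = fun k => if k = 0 then 1 else 0 := by
  funext k
  cases k with
  | zero => simp [Y_zero]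
  | succ k => exact Y_eq_zero_of_le_two_pow (Nat.le_self_pow (Nat.succ_ne_zero k) 2)

theorem Y_antitone (n : ℕ) : Antitone (Y n) := by
  refine antitone_nat_of_succ_le fun k => ?_
  rw [Y_succ, Y_eq_ceilDiv, Y_eq_ceilDiv]
  gcongr
  rw [Nat.ceilDiv_eq_add_pred_div]
  omega

theorem sum_range_Y_add_ceilDiv (n k : ℕ) : ∑ i ∈ Finset.range k, Y n i + n ⌈/⌉ 2 ^ k = n := by
  induction k with
  | zero => simp
  | succ k ih =>
    have h : n ⌈/⌉ 2 ^ (k + 1) = n ⌈/⌉ 2 ^ k ⌈/⌉ 2 := by rw [Nat.ceilDiv_ceilDiv, pow_succ]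
    rw [Finset.sum_range_succ, h, Y_eq_ceilDiv, Nat.ceilDiv_eq_add_pred_div _ 2]
    omega

theorem sum_map_Y_apply (L : List ℕ) (k : ℕ) : (L.map Y).sum k = (L.map (Y · k)).sum := by
  rw [Pi.list_sum_apply, List.map_map]
  rfl

theorem antitone_sum_map_Y (L : List ℕ) : Antitone (L.map Y).sum := fun i j hij => by
  rw [sum_map_Y_apply, sum_map_Y_apply]
  exact List.sum_le_sum fun n _ => Y_antitone n hij

theorem sum_range_sum_map_Y_add (L : List ℕ) (b : ℕ) :
    ∑ i ∈ Finset.range b, (L.map Y).sum i + (L.map (· ⌈/⌉ 2 ^ b)).sum = L.sum := by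
  induction L with
  | nil => simp
  | cons x L ih =>
    have hx := sum_range_Y_add_ceilDiv x b
    simp only [List.map_cons, List.sum_cons, Pi.add_apply, Finset.sum_add_distrib] at ih ⊢
    omega

theorem sum_range_Y_add_sum_range_sum_map_Y_le {L : List ℕ} (hL : ∀ x ∈ L, 0 < x) (a b : ℕ) :
    ∑ i ∈ Finset.range a, Y L.length i + ∑ i ∈ Finset.range b, (L.map Y).sum i ≤
      ∑ i ∈ Finset.range (a + b), Y L.sum i := by
  have hkey := sum_ceilDiv_mul_add_length_le hL (Nat.two_pow_pos b) (2 ^ a)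
  rw [← pow_add, add_comm b] at hkey
  have := sum_range_Y_add_ceilDiv L.length a
  have := sum_range_Y_add_ceilDiv L.sum (a + b)
  have := sum_range_sum_map_Y_add L b
  omega

theorem lexLe_merge_Y_sum_map_Y {L : List ℕ} (hL : ∀ x ∈ L, 0 < x) :
    LexLe (merge (Y L.length) (L.map Y).sum) (Y L.sum) :=
  lexLe_of_sum_range_le fun k => by
    obtain ⟨a, b, rfl, h⟩ := exists_sum_range_merge_le (Y_antitone _) (antitone_sum_map_Y L) k
    exact h.trans (sum_range_Y_add_sum_range_sum_map_Y_le hL a b)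

theorem vals_Y_eq_cons {n : ℕ} (hn : 2 ≤ n) : vals (Y n) = n / 2 ::ₘ vals (Y (n ⌈/⌉ 2)) := by
  have hm : n ⌈/⌉ 2 ≤ n := by rw [Nat.ceilDiv_eq_add_pred_div]; omega
  rw [vals_eq_filter_range (N := n + 1) fun k hk => Y_eq_zero_of_le (by omega),
    vals_eq_filter_range (N := n) fun k hk => Y_eq_zero_of_le (hm.trans hk),
    List.range_succ_eq_map, List.map_cons, List.map_map, Y_zero]
  simp only [Function.comp_def, Nat.succ_eq_add_one, Y_succ]
  rw [← Multiset.cons_coe, Multiset.filter_cons_of_pos _ (by omega)]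

theorem merge_Y_ceilDiv_two {n : ℕ} (hn : 2 ≤ n) :
    merge (Y (n ⌈/⌉ 2)) ((List.replicate (n / 2) 2 ++ List.replicate (n % 2) 1).map Y).sum =
      Y n := by
  have hsum : ((List.replicate (n / 2) 2 ++ List.replicate (n % 2) 1).map Y).sum =
      fun k => if k = 0 then n / 2 else 0 := by
    funext k
    simp [List.sum_replicate, Y_one, Y_two]
  rw [hsum]
  refine merge_eq_of_vals_eq (Y_antitone n) (fun k hk => Y_eq_zero_of_le hk) ?_
  rw [vals_Y_eq_cons hn, vals_ite_zero (by omega), add_comm, Multiset.singleton_add]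

/-- `Y 1 = 0`, `Y 2` is a single box, and for `n ≥ 3` the diagram `Y n` is
the lexicographic maximum of `merge (Y m) (Y j₁ ⊕ ⋯ ⊕ Y jₘ)` over all `2 ≤ m ≤ n - 1`
and lists of positive integers `j₁, …, jₘ` summing to `n`. -/
theorem minimal_box_operad_closed_form :
    Y 1 = (fun _ => 0) ∧
      Y 2 = (fun k => if k = 0 then 1 else 0) ∧
      ∀ n, 3 ≤ n →
        (∀ (m : ℕ) (L : List ℕ), 2 ≤ m → m ≤ n - 1 → L.length = m →
            (∀ x ∈ L, 0 < x) → L.sum = n →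
            LexLe (merge (Y m) (L.map Y).sum) (Y n)) ∧
        (∃ (m : ℕ) (L : List ℕ), 2 ≤ m ∧ m ≤ n - 1 ∧ L.length = m ∧
            (∀ x ∈ L, 0 < x) ∧ L.sum = n ∧
            merge (Y m) (L.map Y).sum = Y n) := by
  refine ⟨Y_one, Y_two, fun n hn => ⟨?_, ?_⟩⟩
  · rintro m L - - rfl hL rfl
    exact lexLe_merge_Y_sum_map_Y hL
  · have hm : n ⌈/⌉ 2 = n / 2 + n % 2 := by rw [Nat.ceilDiv_eq_add_pred_div]; omega
    refine ⟨n ⌈/⌉ 2, List.replicate (n / 2) 2 ++ List.replicate (n % 2) 1, by omega, by omega,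
      by simp [hm], ?_, by simp [List.sum_replicate]; omega, merge_Y_ceilDiv_two (by omega)⟩
    simp only [List.mem_append, List.mem_replicate]
    omega
end
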